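/- In the planted clique model with parameters n, k, Q (n ≥ 2, 1 ≤ k ≤ n−2), consider the modified graph G' obtained by deleting every edge with exactly one endpoint in Q (a monotone modification: no deleted edge lies inside Q, and Q remains a clique in G'). If k − 1 < (n−k−1)/2 − √(n·ln n), then with probability at least 1 − 1/n, every vertex u ∉ Q has G'-degree strictly greater than the G'-degree of every vertex v ∈ Q (each of which equals k−1). In particular, on this event the k highest-degree vertices of G' contain no vertex of Q, so a monotone adversary foils the top-k-degrees algorithm. -/

import Mathlib

open MeasureTheory

namespace Stmt6

noncomputable section
open scoped Classical

variable {n : ℕ}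

/-- Both endpoints of the unordered pair `p` lie in `Q`. -/
def BothInQ (Q : Finset (Fin n)) (p : Sym2 (Fin n)) : Prop := ∀ x ∈ p, x ∈ Q

/-- Index type: unordered pairs of distinct vertices not both lying in `Q`
(the "remaining pairs", whose edge-status is random). -/
def FreePair (n : ℕ) (Q : Finset (Fin n)) : Type :=
  {p : Sym2 (Fin n) // ¬ p.IsDiag ∧ ¬ BothInQ Q p}

instance (n : ℕ) (Q : Finset (Fin n)) : Fintype (FreePair n Q) := by
  unfold FreePair; infer_instance

/-- Sample space of the planted clique model: one Boolean for each free pair. -/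
def Ω (n : ℕ) (Q : Finset (Fin n)) : Type := FreePair n Q → Bool

instance (n : ℕ) (Q : Finset (Fin n)) : MeasurableSpace (Ω n Q) := MeasurableSpace.pi

/-- The Bernoulli(1/2) measure on `Bool`. -/
def bernoulliHalf : Measure Bool := (PMF.bernoulli (1 / 2) (by norm_num)).toMeasure

instance : IsProbabilityMeasure bernoulliHalf := PMF.toMeasure.isProbabilityMeasure _

/-- The planted clique measure: each remaining pair is an edge independently w.p. 1/2. -/
def plantedClique (n : ℕ) (Q : Finset (Fin n)) : Measure (Ω n Q) :=
  Measure.pi fun _ => bernoulliHalf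

/-- `u` and `v` are adjacent in the planted clique graph: they are distinct, and
either both lie in `Q` (a planted clique edge) or else the coin of the pair `{u,v}`
came up `true`. -/
def Adj (Q : Finset (Fin n)) (ω : Ω n Q) (u v : Fin n) : Prop :=
  ∃ hne : u ≠ v,
    BothInQ Q s(u, v) ∨
      ∃ h : ¬ BothInQ Q s(u, v),
        ω ⟨s(u, v), ⟨fun hd => hne (Sym2.mk_isDiag_iff.mp hd), h⟩⟩ = true

/-- Degree of vertex `v` in the planted clique graph: its number of neighbors. -/
def deg (Q : Finset (Fin n)) (ω : Ω n Q) (v : Fin n) : ℕ :=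
  (Finset.univ.filter fun u : Fin n => Adj Q ω u v).card

end

noncomputable section
open scoped Classical

variable {n : ℕ}

/-- Adjacency in the modified graph `G'` produced by the monotone adversary, which
deletes every edge with exactly one endpoint in `Q`: the surviving edges are those
of the planted clique graph with both endpoints in `Q` (always present) or with
both endpoints outside `Q` (present iff the coin of the pair came up `true`). -/
def Adj' (Q : Finset (Fin n)) (ω : Ω n Q) (u v : Fin n) : Prop :=
  ∃ hne : u ≠ v,
    BothInQ Q s(u, v) ∨
      ((u ∉ Q ∧ v ∉ Q) ∧
        ∃ h : ¬ BothInQ Q s(u, v),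
          ω ⟨s(u, v), ⟨fun hd => hne (Sym2.mk_isDiag_iff.mp hd), h⟩⟩ = true)

/-- Degree of vertex `v` in the modified graph `G'`. -/
def deg' (Q : Finset (Fin n)) (ω : Ω n Q) (v : Fin n) : ℕ :=
  (Finset.univ.filter fun u : Fin n => Adj' Q ω u v).card

end

/-! In `G'` a vertex of `Q` keeps exactly its `k - 1` clique neighbours, while the degree of
`u ∉ Q` counts heads among the `n - k - 1` independent fair coins of the pairs `{w, u}` with
`w ∉ Q`. Hoeffding's inequality bounds the probability that this count is at most `k - 1` by
`exp (-2 δ² / (n - k - 1)) ≤ 1 / n²`, where `δ = (n - k - 1) / 2 - (k - 1) > √(n log n)`, and a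
union bound over the at most `n` vertices outside `Q` gives `1 / n`. -/
open Finset ProbabilityTheory Real

section FairCoins

variable {ι α : Type*} [Fintype ι] [Fintype α]

set_option linter.deprecated false in
lemma integral_bernoulliHalf (f : Bool → ℝ) :
    ∫ b, f b ∂bernoulliHalf = (f true + f false) / 2 := by
  rw [bernoulliHalf, PMF.integral_eq_sum, Fintype.sum_bool]
  simp [PMF.bernoulli_apply]
  ring

lemma hasSubgaussianMGF_half_sub_heads (i : ι) :
    HasSubgaussianMGF (fun ω : ι → Bool => 1 / 2 - if ω i then (1 : ℝ) else 0) (1 / 4)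
      (Measure.pi fun _ => bernoulliHalf) := by
  have h := hasSubgaussianMGF_of_mem_Icc_of_integral_eq_zero (a := -1/2) (b := 1/2)
    (μ := Measure.pi fun _ : ι => bernoulliHalf)
    (X := fun ω : ι → Bool => 1 / 2 - if ω i then (1 : ℝ) else 0) (by fun_prop)
    (ae_of_all _ fun ω => by cases ω i <;> norm_num)
    (by rw [integral_comp_eval (μ := fun _ => bernoulliHalf) (i := i)
        (f := fun b : Bool => 1 / 2 - if b then (1 : ℝ) else 0) (by fun_prop),
      integral_bernoulliHalf]; norm_num)
  convert h
  norm_num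

lemma measure_card_heads_le_le {e : α → ι} (he : Function.Injective e) {t : ℝ}
    (ht : t ≤ Fintype.card α / 2) :
    Measure.pi (fun _ => bernoulliHalf) {ω : ι → Bool | (#{a | ω (e a)} : ℝ) ≤ t} ≤
      ENNReal.ofReal (exp (-2 * (Fintype.card α / 2 - t) ^ 2 / Fintype.card α)) := by
  have hindep : iIndepFun (fun a (ω : ι → Bool) => 1 / 2 - if ω (e a) then (1 : ℝ) else 0)
      (Measure.pi fun _ => bernoulliHalf) :=
    (iIndepFun_pi (X := fun (_ : ι) (b : Bool) => (1 / 2 - if b then 1 else 0 : ℝ))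
      fun _ => by fun_prop).precomp he
  have hoeffding := HasSubgaussianMGF.measure_sum_ge_le_of_iIndepFun hindep (s := univ)
    (fun a _ => hasSubgaussianMGF_half_sub_heads (e a)) (sub_nonneg.2 ht)
  have hsum (ω : ι → Bool) :
      ∑ a, (1 / 2 - if ω (e a) then (1 : ℝ) else 0) = Fintype.card α / 2 - #{a | ω (e a)} := by
    rw [sum_sub_distrib, sum_boole]
    simp [div_eq_mul_inv]
  rw [← ofReal_measureReal]
  refine ENNReal.ofReal_le_ofReal (le_of_eq_of_le ?_ (hoeffding.trans_eq ?_))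
  · simp only [hsum, sub_le_sub_iff_left]
  · simp only [sum_const, card_univ, nsmul_eq_mul]
    push_cast
    ring_nf

end FairCoins

lemma exp_neg_two_mul_sq_div_le_one_div_sq {m x δ : ℝ} (hm : 0 < m) (hmx : m ≤ x)
    (hδ : √(x * log x) < δ) :
    exp (-2 * δ ^ 2 / m) ≤ 1 / x ^ 2 := by
  have hx : 0 < x := hm.trans_le hmx
  have hlog : log x ≤ δ ^ 2 / m :=
    calc log x ≤ δ ^ 2 / x := by
          rw [le_div_iff₀ hx, mul_comm]; exact (lt_sq_of_sqrt_lt hδ).le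
      _ ≤ δ ^ 2 / m := div_le_div_of_nonneg_left (sq_nonneg δ) hm hmx
  calc exp (-2 * δ ^ 2 / m) ≤ exp (-2 * log x) := by
        gcongr; rw [mul_div_assoc]; linarith
    _ = 1 / x ^ 2 := by
        rw [show -2 * log x = log (x ^ 2)⁻¹ by rw [log_inv, log_pow]; push_cast; ring,
          exp_log (by positivity), one_div]

section PlantedClique

variable {n : ℕ} {Q : Finset (Fin n)} {u v : Fin n}

instance : IsProbabilityMeasure (plantedClique n Q) := by
  unfold plantedClique; exact Measure.pi.instIsProbabilityMeasure _

open scoped Classical in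
lemma deg'_of_mem (ω : Ω n Q) (hv : v ∈ Q) : deg' Q ω v = #Q - 1 := by
  suffices h : ({w | Adj' Q ω w v} : Finset (Fin n)) = Q.erase v by
    rw [deg', h, card_erase_of_mem hv]
  ext w
  simp only [mem_filter, mem_univ, true_and, mem_erase]
  constructor
  · rintro ⟨hne, hQ | ⟨⟨-, hvQ⟩, -⟩⟩
    · exact ⟨hne, hQ w (Sym2.mem_mk_left w v)⟩
    · exact absurd hv hvQ
  · rintro ⟨hne, hw⟩
    refine ⟨hne, Or.inl fun x hx => ?_⟩
    rcases Sym2.mem_iff.mp hx with rfl | rfl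
    exacts [hw, hv]

lemma deg'_lt_deg'_of_card_sub_one_lt (ω : Ω n Q) (hv : v ∈ Q)
    (hu : (#Q : ℝ) - 1 < deg' Q ω u) : deg' Q ω v < deg' Q ω u := by
  have hQ : 0 < #Q := card_pos.2 ⟨v, hv⟩
  have hlt : #Q < deg' Q ω u + 1 := by exact_mod_cast sub_lt_iff_lt_add.1 hu
  rw [deg'_of_mem ω hv]
  omega

def outsidePair (hu : u ∉ Q) (w : {w // w ∉ Q ∧ w ≠ u}) : FreePair n Q :=
  ⟨s(w.1, u), fun hd => w.2.2 (Sym2.mk_isDiag_iff.mp hd),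
    fun hQ => hu (hQ u (Sym2.mem_mk_right _ _))⟩

lemma outsidePair_injective (hu : u ∉ Q) : Function.Injective (outsidePair hu) := by
  rintro ⟨w, hw⟩ ⟨w', hw'⟩ h
  rcases Sym2.eq_iff.mp (congrArg Subtype.val h) with ⟨rfl, -⟩ | ⟨hwu, -⟩
  · rfl
  · exact absurd hwu hw.2

lemma adj'_iff_of_notMem (hu : u ∉ Q) (ω : Ω n Q) (w : Fin n) :
    Adj' Q ω w u ↔ ∃ hw : w ∉ Q ∧ w ≠ u, ω (outsidePair hu ⟨w, hw⟩) = true := by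
  constructor
  · rintro ⟨hne, hQ | ⟨⟨hw, -⟩, _, heads⟩⟩
    · exact absurd (hQ u (Sym2.mem_mk_right w u)) hu
    · exact ⟨⟨hw, hne⟩, heads⟩
  · rintro ⟨⟨hw, hne⟩, heads⟩
    exact ⟨hne, Or.inr ⟨⟨hw, hu⟩, (outsidePair hu ⟨w, hw, hne⟩).2.2, heads⟩⟩

lemma deg'_of_notMem (hu : u ∉ Q) (ω : Ω n Q) :
    deg' Q ω u = #{w | ω (outsidePair hu w)} := by
  rw [deg', ← card_map (Function.Embedding.subtype _)]
  congr 1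
  ext w
  simp [adj'_iff_of_notMem hu]

lemma card_outside_ne (hu : u ∉ Q) :
    (Fintype.card {w // w ∉ Q ∧ w ≠ u} : ℝ) = n - #Q - 1 := by
  have hQn : #Q < n := by simpa using card_lt_univ_of_notMem hu
  have h : ({w | w ∉ Q ∧ w ≠ u} : Finset (Fin n)) = Qᶜ.erase u := by ext w; simp [and_comm]
  rw [Fintype.card_subtype, h, card_erase_of_mem (by simpa using hu), card_compl,
    Fintype.card_fin, Nat.cast_sub (by omega), Nat.cast_sub hQn.le]
  push_cast; ring

lemma measure_deg'_le_le (hu : u ∉ Q) {t : ℝ} (ht : t ≤ ((n : ℝ) - #Q - 1) / 2) :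
    plantedClique n Q {ω | (deg' Q ω u : ℝ) ≤ t} ≤
      ENNReal.ofReal (exp (-2 * (((n : ℝ) - #Q - 1) / 2 - t) ^ 2 / ((n : ℝ) - #Q - 1))) := by
  rw [← card_outside_ne hu] at ht ⊢
  simp only [deg'_of_notMem hu]
  exact measure_card_heads_le_le (outsidePair_injective hu) ht

lemma measure_deg'_le_card_sub_one_le (hu : u ∉ Q) (hQn : #Q + 2 ≤ n)
    (hsmall : (#Q : ℝ) - 1 < ((n : ℝ) - #Q - 1) / 2 - √(n * log n)) :
    plantedClique n Q {ω | (deg' Q ω u : ℝ) ≤ #Q - 1} ≤ ENNReal.ofReal (1 / n ^ 2) := by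
  have hQn' : (#Q : ℝ) + 2 ≤ n := by exact_mod_cast hQn
  have hm : (0 : ℝ) < n - #Q - 1 := by linarith
  refine (measure_deg'_le_le hu (by linarith [sqrt_nonneg ((n : ℝ) * log n)])).trans
    (ENNReal.ofReal_le_ofReal (exp_neg_two_mul_sq_div_le_one_div_sq hm ?_ (by linarith)))
  linarith [(#Q).cast_nonneg (α := ℝ)]

lemma measure_exists_deg'_le_card_sub_one_le (hQn : #Q + 2 ≤ n)
    (hsmall : (#Q : ℝ) - 1 < ((n : ℝ) - #Q - 1) / 2 - √(n * log n)) :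
    plantedClique n Q {ω | ∃ u ∉ Q, (deg' Q ω u : ℝ) ≤ #Q - 1} ≤ ENNReal.ofReal (1 / n) := by
  have hn : (0 : ℝ) < n := by exact_mod_cast (by omega : 0 < n)
  calc plantedClique n Q {ω | ∃ u ∉ Q, (deg' Q ω u : ℝ) ≤ #Q - 1}
      = plantedClique n Q (⋃ u ∈ Qᶜ, {ω | (deg' Q ω u : ℝ) ≤ #Q - 1}) := by
        congr 1; ext ω; simp
    _ ≤ ∑ u ∈ Qᶜ, plantedClique n Q {ω | (deg' Q ω u : ℝ) ≤ #Q - 1} :=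
        measure_biUnion_finset_le _ _
    _ ≤ #Qᶜ • ENNReal.ofReal (1 / n ^ 2) := sum_le_card_nsmul _ _ _ fun u hu =>
        measure_deg'_le_card_sub_one_le (mem_compl.1 hu) hQn hsmall
    _ ≤ n • ENNReal.ofReal (1 / n ^ 2) := by
        gcongr; simpa using card_le_univ Qᶜ
    _ = ENNReal.ofReal (1 / n) := by
        rw [nsmul_eq_mul, ← ENNReal.ofReal_natCast, ← ENNReal.ofReal_mul hn.le]
        congr 1; field_simp

end PlantedClique

theorem monotone_adversary_foils_top_k_degrees_general (n k : ℕ) (hn : 2 ≤ n)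
    (hkn : k ≤ n - 2)
    (Q : Finset (Fin n)) (hQ : Q.card = k)
    (hsmall : (k : ℝ) - 1 < ((n : ℝ) - k - 1) / 2 - Real.sqrt (n * Real.log n)) :
    1 - ENNReal.ofReal (1 / n) ≤
      plantedClique n Q {ω : Ω n Q |
        (∀ v ∈ Q, deg' Q ω v = k - 1) ∧
          ∀ u ∉ Q, ∀ v ∈ Q, deg' Q ω v < deg' Q ω u} := by
  subst hQ
  set bad := {ω : Ω n Q | ∃ u ∉ Q, (deg' Q ω u : ℝ) ≤ #Q - 1}
  calc 1 - ENNReal.ofReal (1 / n) ≤ plantedClique n Q Set.univ - plantedClique n Q bad := by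
        rw [measure_univ]
        gcongr
        exact measure_exists_deg'_le_card_sub_one_le (by omega) hsmall
    _ ≤ plantedClique n Q (Set.univ \ bad) := le_measure_sdiff
    _ ≤ _ := by
        refine measure_mono fun ω ⟨_, hω⟩ => ⟨fun v hv => deg'_of_mem ω hv, fun u hu v hv => ?_⟩
        exact deg'_lt_deg'_of_card_sub_one_lt ω hv (not_le.1 fun h => hω ⟨u, hu, h⟩)

theorem monotone_adversary_foils_top_k_degrees (n k : ℕ) (hn : 2 ≤ n)
    (hk1 : 1 ≤ k) (hkn : k ≤ n - 2)
    (Q : Finset (Fin n)) (hQ : Q.card = k)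
    (hsmall : (k : ℝ) - 1 < ((n : ℝ) - k - 1) / 2 - Real.sqrt (n * Real.log n)) :
    1 - ENNReal.ofReal (1 / n) ≤
      plantedClique n Q {ω : Ω n Q |
        (∀ v ∈ Q, deg' Q ω v = k - 1) ∧
          ∀ u ∉ Q, ∀ v ∈ Q, deg' Q ω v < deg' Q ω u} :=
  monotone_adversary_foils_top_k_degrees_general n k hn hkn Q hQ hsmall

end Stmt6
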